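/- arXiv:1007.4665 — 3 statements merged into one kernel-verified Lean document; each statement's English description precedes it below -/
import Mathlib

section
/- For all integers n ≥ 1 and 0 ≤ k ≤ n, the k-th elementary symmetric polynomial evaluated at (x₁+1, x₂+1, …, xₙ+1) equals the sum over i from 0 to k of (n−i choose n−k) times the i-th elementary symmetric polynomial of (x₁, …, xₙ). -/
open Finset in
lemma count_supersets {α : Type*} [DecidableEq α] (s B : Finset α) (hB : B ⊆ s) (k : ℕ)
    (hik : B.card ≤ k) :
    ((Finset.powersetCard k s).filter (fun A => B ⊆ A)).card
      = (s.card - B.card).choose (k - B.card) := by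
  rw [← card_sdiff_of_subset hB, ← Finset.card_powersetCard (k - B.card) (s \ B)]
  apply Finset.card_nbij' (fun A => A \ B) (fun C => C ∪ B)
  · intro A hA
    simp only [mem_coe, mem_filter, mem_powersetCard] at hA
    obtain ⟨⟨hAs, hAk⟩, hBA⟩ := hA
    simp only [mem_coe, mem_powersetCard]
    exact ⟨sdiff_subset_sdiff hAs (le_refl B), by rw [card_sdiff_of_subset hBA, hAk]⟩
  · intro C hC
    simp only [mem_coe, mem_powersetCard] at hC
    obtain ⟨hCs, hCc⟩ := hC
    have hdisj : Disjoint C B := disjoint_of_subset_left hCs sdiff_disjoint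
    simp only [mem_coe, mem_filter, mem_powersetCard]
    refine ⟨⟨union_subset (hCs.trans (sdiff_subset)) hB, ?_⟩, subset_union_right⟩
    rw [card_union_of_disjoint hdisj, hCc]
    omega
  · intro A hA
    simp only [mem_coe, mem_filter] at hA
    exact sdiff_union_of_subset hA.2
  · intro C hC
    simp only [mem_coe, mem_powersetCard] at hC
    exact union_sdiff_cancel_right (disjoint_of_subset_left hC.1 sdiff_disjoint)

/-- The `k`-th elementary symmetric polynomial of `x 0, …, x (n-1)`. -/
def esymm {R : Type*} [CommRing R] (n k : ℕ) (x : Fin n → R) : R :=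
  ∑ A ∈ Finset.powersetCard k (Finset.univ : Finset (Fin n)), ∏ j ∈ A, x j

theorem esymm_shift {R : Type*} [CommRing R] (n k : ℕ) (hn : 1 ≤ n) (hk : k ≤ n)
    (x : Fin n → R) :
    esymm n k (fun j => x j + 1) =
      ∑ i ∈ Finset.range (k + 1), ((n - i).choose (n - k) : R) * esymm n i x := by
  unfold esymm
  have hprod : ∀ A : Finset (Fin n), ∏ j ∈ A, (x j + 1) = ∑ B ∈ A.powerset, ∏ j ∈ B, x j := by
    intro A
    rw [Finset.prod_add]
    exact Finset.sum_congr rfl fun B _ => by simp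
  simp only [hprod]
  rw [Finset.sum_comm' (t' := (Finset.univ.powerset).filter (fun B => B.card ≤ k))
      (s' := fun B => (Finset.powersetCard k Finset.univ).filter (fun A => B ⊆ A))
      (by
        intro A B
        simp only [Finset.mem_powersetCard, Finset.mem_powerset, Finset.mem_filter]
        constructor
        · rintro ⟨⟨hAu, hAk⟩, hBA⟩
          exact ⟨⟨⟨hAu, hAk⟩, hBA⟩, hBA.trans hAu, hAk ▸ Finset.card_le_card hBA⟩
        · rintro ⟨⟨h1, h2⟩, _⟩
          exact ⟨h1, h2⟩)]
  have hset : ((Finset.univ : Finset (Fin n)).powerset).filter (fun B => B.card ≤ k)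
      = (Finset.range (k + 1)).biUnion (fun i => Finset.powersetCard i Finset.univ) := by
    ext B
    simp [Finset.mem_biUnion, Finset.mem_powersetCard, Nat.lt_succ_iff]
  rw [hset, Finset.sum_biUnion]
  · refine Finset.sum_congr rfl fun i hi => ?_
    rw [Finset.mul_sum]
    refine Finset.sum_congr rfl fun B hB => ?_
    simp only [Finset.mem_powersetCard] at hB
    rw [Finset.sum_const, nsmul_eq_mul]
    congr 1
    rw [count_supersets _ _ hB.1 k (hB.2 ▸ (by
      simp only [Finset.mem_range, Nat.lt_succ_iff] at hi; exact hi))]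
    rw [Finset.card_univ, Fintype.card_fin, hB.2]
    simp only [Finset.mem_range, Nat.lt_succ_iff] at hi
    have : (n - i).choose (n - k) = (n - i).choose (k - i) := by
      rw [← Nat.choose_symm (by omega : k - i ≤ n - i)]
      congr 1
      omega
    rw [this]
  · intro a ha b hb hab
    exact Finset.disjoint_left.mpr fun B hBa hBb => hab (by
      simp only [Finset.mem_powersetCard] at hBa hBb
      omega)
end

section
/- Let (k_j^{(i)}) for 1 ≤ i ≤ m, 1 ≤ j ≤ n be nonzero integers, and suppose that in the field ℚ(g) the identity Σ_{i=1}^m Σ_{j=1}^n 1/(1 − g^{k_j^{(i)}}) = mn/2 holds (as rational functions of g). Then for every nonzero integer k, #{(i,j) : k_j^{(i)} = k} = #{(i,j) : k_j^{(i)} = −k}. -/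
/-!
For `k ≠ 0` the identity `1/(1 - g^(-k)) = 1 - 1/(1 - g^k)` makes `x ↦ 1/(1 - g^x) - 1/2` odd, so
with `N c` the number of pairs `(i, j)` with `k_j^(i) = c` the hypothesis becomes
`∑_{d > 0} (N d - N (-d)) (1/(1 - g^d) - 1/2) = 0`. The functions `1/(1 - g^d)`, `d ≥ 1`, are
linearly independent modulo constants: if `d` is the largest index with a nonzero coefficient,
clear denominators and evaluate at a primitive `d`-th root of unity, which is a root of `1 - g^d`
and of no `1 - g^e` with `0 < e < d`.
-/

open Finset Polynomial

theorem inv_one_sub_inv_add_inv_one_sub {K : Type*} [Field K] {u : K} (hu : u ≠ 0)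
    (hu1 : u ≠ 1) : (1 - u⁻¹)⁻¹ + (1 - u)⁻¹ = 1 := by
  rw [show 1 - u⁻¹ = (u - 1) / u by field_simp, inv_div]
  field_simp
  ring

theorem Polynomial.X_pow_ne_one {R : Type*} [CommRing R] [Nontrivial R] {n : ℕ} (hn : n ≠ 0) :
    (X ^ n : R[X]) ≠ 1 := by
  simpa [sub_eq_zero] using X_pow_sub_C_ne_zero (Nat.pos_of_ne_zero hn) (1 : R)

theorem RatFunc.X_pow_ne_one {F : Type*} [Field F] {n : ℕ} (hn : n ≠ 0) :
    (X ^ n : RatFunc F) ≠ 1 := by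
  rw [← algebraMap_X, ← map_pow, ← map_one (algebraMap F[X] (RatFunc F)), Ne,
    (algebraMap_injective F).eq_iff]
  exact Polynomial.X_pow_ne_one hn

theorem Finset.sum_comp_eq_sum_natAbs_of_odd {ι M : Type*} [AddCommGroup M] {s : Finset ι}
    {k : ι → ℤ} {S : Finset ℕ} (hS : 0 ∉ S) (hkS : ∀ i ∈ s, (k i).natAbs ∈ S) {g : ℤ → M}
    (hg : ∀ d ∈ S, g (-d) = -g d) :
    ∑ i ∈ s, g (k i) = ∑ d ∈ S, ((#{i ∈ s | k i = d} : ℤ) - #{i ∈ s | k i = -d}) • g d := by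
  classical
  rw [← sum_fiberwise_of_maps_to hkS]
  refine sum_congr rfl fun d hd => ?_
  have hd0 : (d : ℤ) ≠ -d := by
    have : d ≠ 0 := fun h => hS (h ▸ hd)
    omega
  have hfiber : {i ∈ s | (k i).natAbs = d} = {i ∈ s | k i = d} ∪ {i ∈ s | k i = -d} := by
    ext i
    simp only [mem_filter, mem_union, ← and_or_left]
    exact and_congr_right fun _ => by omega
  have hdisj : Disjoint {i ∈ s | k i = d} {i ∈ s | k i = -d} :=
    disjoint_filter.2 fun i _ h1 h2 => hd0 (h1 ▸ h2)
  calc ∑ i ∈ s with (k i).natAbs = d, g (k i)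
      = ∑ i ∈ s with k i = d, g d + ∑ i ∈ s with k i = -d, g (-d) := by
        rw [hfiber, sum_union hdisj]
        congr 1 <;> exact sum_congr rfl fun i hi => by rw [(mem_filter.1 hi).2]
    _ = _ := by
        rw [sum_const, sum_const, hg d hd, smul_neg, sub_smul, natCast_zsmul, natCast_zsmul,
          sub_eq_add_neg]

namespace RatFunc

theorem eq_zero_of_sum_smul_inv_eq_C {F L ι : Type*} [Field F] [Field L] [Algebra F L]
    [DecidableEq ι] {S : Finset ι} {q : ι → F[X]} {a : ι → F} {c : F}
    (h : ∑ i ∈ S, a i • (algebraMap F[X] (RatFunc F) (q i))⁻¹ = C c)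
    {i₀ : ι} (hi₀ : i₀ ∈ S) (hq₀ : q i₀ ≠ 0) {x : L} (hx : aeval x (q i₀) = 0)
    (hx_ne : ∀ i ∈ S, i ≠ i₀ → aeval x (q i) ≠ 0) : a i₀ = 0 := by
  have hq : ∀ i ∈ S, algebraMap F[X] (RatFunc F) (q i) ≠ 0 := fun i hi => by
    rw [Ne, map_eq_zero_iff _ (algebraMap_injective F)]
    by_cases hi' : i = i₀
    · exact hi' ▸ hq₀
    · exact fun h0 => hx_ne i hi hi' (by rw [h0, map_zero])
  have hpoly : ∑ i ∈ S, Polynomial.C (a i) * ∏ j ∈ S.erase i, q j =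
      Polynomial.C c * ∏ j ∈ S, q j := by
    apply algebraMap_injective F
    simp only [map_sum, map_mul, map_prod, algebraMap_C, ← h, sum_mul]
    refine sum_congr rfl fun i hi => ?_
    rw [← mul_prod_erase S _ hi, smul_eq_C_mul, mul_assoc, inv_mul_cancel_left₀ (hq i hi)]
  have heval := congrArg (aeval x) hpoly
  rw [map_sum, sum_eq_single i₀, map_mul, map_mul, map_prod, map_prod, prod_eq_zero hi₀ hx,
    mul_zero, aeval_C, mul_eq_zero, prod_eq_zero_iff] at heval
  · obtain ha | ⟨i, hi, hxi⟩ := heval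
    · exact (map_eq_zero_iff _ (algebraMap F L).injective).1 ha
    · exact absurd hxi (hx_ne i (mem_of_mem_erase hi) (ne_of_mem_erase hi))
  · intro i hi hi'
    rw [map_mul, map_prod, prod_eq_zero (mem_erase.2 ⟨Ne.symm hi', hi₀⟩) hx, mul_zero]
  · exact fun h => absurd hi₀ h

theorem eq_zero_of_sum_smul_inv_one_sub_X_pow_eq_C {F : Type*} [Field F] [CharZero F]
    {S : Finset ℕ} (hS : 0 ∉ S) {a : ℕ → F} {c : F}
    (h : ∑ d ∈ S, a d • (1 - X ^ d : RatFunc F)⁻¹ = C c) : ∀ d ∈ S, a d = 0 := by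
  induction S using Finset.induction_on_max generalizing c with
  | empty => simp
  | insert n s hlt ih =>
    have hn : n ≠ 0 := fun h => hS (h ▸ mem_insert_self n s)
    have hns : n ∉ s := fun h => (hlt n h).false
    have : NeZero (n : F) := ⟨Nat.cast_ne_zero.2 hn⟩
    obtain ⟨ζ, hζ⟩ := HasEnoughRootsOfUnity.exists_primitiveRoot (AlgebraicClosure F) n
    have han : a n = 0 := by
      refine eq_zero_of_sum_smul_inv_eq_C (q := fun d => 1 - Polynomial.X ^ d) (c := c) (x := ζ)
        ?_ (mem_insert_self n s) (sub_ne_zero.2 (Polynomial.X_pow_ne_one hn).symm) ?_ ?_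
      · simpa using h
      · simp [hζ.pow_eq_one]
      · intro d hd hdn
        have hd0 : 0 < d := Nat.pos_of_ne_zero fun h => hS (h ▸ hd)
        have hdlt : d < n := hlt d ((mem_insert.1 hd).resolve_left hdn)
        rw [map_sub, map_one, map_pow, aeval_X, sub_ne_zero, ne_comm, Ne,
          hζ.pow_eq_one_iff_dvd]
        exact fun hdvd => (Nat.le_of_dvd hd0 hdvd).not_gt hdlt
    rw [sum_insert hns, han, zero_smul, zero_add] at h
    intro d hd
    obtain rfl | hd := mem_insert.1 hd
    · exact han
    · exact ih (fun h0 => hS (mem_insert_of_mem h0)) h d hd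

theorem eq_zero_of_sum_zsmul_inv_one_sub_X_zpow_sub_half_eq_zero {F : Type*} [Field F]
    [CharZero F] {S : Finset ℕ} (hS : 0 ∉ S) {a : ℕ → ℤ}
    (h : ∑ d ∈ S, a d • ((1 - X ^ (d : ℤ))⁻¹ - 2⁻¹ : RatFunc F) = 0) : ∀ d ∈ S, a d = 0 := by
  have ha : ∀ d ∈ S, (a d : F) = 0 := by
    refine eq_zero_of_sum_smul_inv_one_sub_X_pow_eq_C hS (c := ∑ d ∈ S, (a d : F) / 2) ?_
    simp only [zpow_natCast, smul_sub, sum_sub_distrib, sub_eq_zero] at h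
    rw [map_sum]
    convert h using 2 with d hd d hd
    · rw [smul_eq_C_mul, zsmul_eq_mul, map_intCast]
    · simp [div_eq_mul_inv, map_ofNat C 2]
  exact fun d hd => Int.cast_eq_zero.1 (ha d hd)

end RatFunc

theorem weights_pair_of_sum_inv (m n : ℕ) (k : Fin m → Fin n → ℤ)
    (hk : ∀ i j, k i j ≠ 0)
    (h : ∑ i, ∑ j, (1 - (RatFunc.X : RatFunc ℚ) ^ k i j)⁻¹ =
        RatFunc.C ((m * n : ℚ) / 2)) :
    ∀ c : ℤ, c ≠ 0 →
      (Finset.univ.filter fun p : Fin m × Fin n => k p.1 p.2 = c).card =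
      (Finset.univ.filter fun p : Fin m × Fin n => k p.1 p.2 = -c).card := by
  intro c hc
  set g : ℤ → RatFunc ℚ := fun x => (1 - RatFunc.X ^ x)⁻¹ - 2⁻¹
  -- `c.natAbs` is inserted so that it lies in `S` even when no `k i j` equals `± c`.
  set S : Finset ℕ := insert c.natAbs (univ.image fun p : Fin m × Fin n => (k p.1 p.2).natAbs)
  have hS : 0 ∉ S := by simp [S, hk, (Int.natAbs_ne_zero.2 hc).symm]
  have hodd : ∀ d ∈ S, g (-d) = -g d := fun d hd => by
    have hd : d ≠ 0 := fun h => hS (h ▸ hd)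
    simp only [g, zpow_neg, zpow_natCast]
    linear_combination inv_one_sub_inv_add_inv_one_sub (pow_ne_zero d RatFunc.X_ne_zero)
      (RatFunc.X_pow_ne_one (F := ℚ) hd)
  have hsum : ∑ p : Fin m × Fin n, g (k p.1 p.2) = 0 := by
    simp only [g, sum_sub_distrib, Fintype.sum_prod_type, h, sum_const, card_univ,
      Fintype.card_prod, Fintype.card_fin, nsmul_eq_mul, map_div₀, eq_ratCast]
    push_cast
    ring
  rw [sum_comp_eq_sum_natAbs_of_odd hS (by simp [S]) hodd] at hsum
  have hcount := sub_eq_zero.1 <|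
    RatFunc.eq_zero_of_sum_zsmul_inv_one_sub_X_zpow_sub_half_eq_zero hS hsum c.natAbs
      (mem_insert_self _ _)
  rcases Int.natAbs_eq c with hc' | hc' <;> rw [hc']
  · exact_mod_cast hcount
  · rw [neg_neg]; exact_mod_cast hcount.symm
end

section
/- Let k₁ ≥ k₂ ≥ k₃ ≥ 1 be integers and let N₀, N₃, s₁, s₂, s₃, t₁, t₂, t₃ be natural numbers such that the polynomial N₀ − (s₁g^{k₁} + s₂g^{k₂} + s₃g^{k₃}) + (t₁g^{k₂+k₃} + t₂g^{k₁+k₃} + t₃g^{k₁+k₂}) − N₃g^{k₁+k₂+k₃} is the zero polynomial in g, and not all of these eight numbers are zero. Then N₀ = N₃ = s₂ = s₃ = t₂ = t₃ = 0, s₁ = t₁ ≥ 1, and k₁ = k₂ + k₃. -/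
/-!
Once the negative terms are moved to the other side, every monomial has a nonnegative coefficient,
so a monomial can only be cancelled by one of the same degree on the opposite side. Under
`k₁ ≥ k₂ ≥ k₃ ≥ 1` the only possible coincidence of degrees across the two sides is
`k₁ = k₂ + k₃`, pairing `s₁ g^k₁` with `t₁ g^(k₂+k₃)`.
-/

open Polynomial

namespace Polynomial

variable {R ι κ : Type*} [Semiring R] [Fintype ι] [Fintype κ]

theorem coeff_sum_monomial_of_forall_ne (b : κ → R) {f : κ → ℕ} {n : ℕ}
    (hn : ∀ j, f j ≠ n) : (∑ j, monomial (f j) (b j)).coeff n = 0 := by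
  rw [finsetSum_coeff]
  exact Finset.sum_eq_zero fun j _ => coeff_monomial_of_ne _ fun hj => hn j hj.symm

variable [PartialOrder R] [IsOrderedAddMonoid R]

theorem le_coeff_sum_monomial {a : ι → R} (ha : ∀ i, 0 ≤ a i) (e : ι → ℕ) (i : ι) :
    a i ≤ (∑ i', monomial (e i') (a i')).coeff (e i) := by
  rw [finsetSum_coeff]
  calc a i = (monomial (e i) (a i)).coeff (e i) := (coeff_monomial_same _ _).symm
    _ ≤ _ := Finset.single_le_sum (f := fun i' => (monomial (e i') (a i')).coeff (e i))
        (fun i' _ => by rw [coeff_monomial]; split_ifs <;> simp [ha i']) (Finset.mem_univ i)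

theorem eq_zero_of_sum_monomial_eq_of_forall_ne {a : ι → R} {b : κ → R} {e : ι → ℕ}
    {f : κ → ℕ} (h : ∑ i, monomial (e i) (a i) = ∑ j, monomial (f j) (b j))
    (ha : ∀ i, 0 ≤ a i) {i : ι} (hi : ∀ j, f j ≠ e i) : a i = 0 := by
  refine le_antisymm ?_ (ha i)
  simpa only [h, coeff_sum_monomial_of_forall_ne b hi] using le_coeff_sum_monomial ha e i

end Polynomial

/-- Degrees of the terms `N₀, t₁, t₂, t₃`, which enter with a plus sign. -/
def plusDegrees (k₁ k₂ k₃ : ℕ) : Fin 4 → ℕ := ![0, k₂ + k₃, k₁ + k₃, k₁ + k₂]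

/-- Degrees of the terms `s₁, s₂, s₃, N₃`, which enter with a minus sign. -/
def minusDegrees (k₁ k₂ k₃ : ℕ) : Fin 4 → ℕ := ![k₁, k₂, k₃, k₁ + k₂ + k₃]

theorem minusDegrees_eq_plusDegrees {k₁ k₂ k₃ : ℕ} (h12 : k₂ ≤ k₁) (h23 : k₃ ≤ k₂) (h3 : 1 ≤ k₃)
    {i j : Fin 4} (hij : minusDegrees k₁ k₂ k₃ j = plusDegrees k₁ k₂ k₃ i) :
    i = 1 ∧ j = 0 ∧ k₁ = k₂ + k₃ := by
  fin_cases i <;> fin_cases j <;>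
    simp only [plusDegrees, minusDegrees, Fin.reduceFinMk, Fin.zero_eta, Fin.mk_one, Fin.isValue,
      Matrix.cons_val, Matrix.cons_val_zero, Matrix.cons_val_one, Fin.reduceEq, true_and,
      false_and] at hij ⊢ <;>
    omega

theorem godinho_case_nonhamiltonian (k₁ k₂ k₃ : ℕ)
    (h12 : k₂ ≤ k₁) (h23 : k₃ ≤ k₂) (h3 : 1 ≤ k₃)
    (N₀ N₃ s₁ s₂ s₃ t₁ t₂ t₃ : ℕ)
    (hne : ¬ (N₀ = 0 ∧ N₃ = 0 ∧ s₁ = 0 ∧ s₂ = 0 ∧ s₃ = 0 ∧ t₁ = 0 ∧ t₂ = 0 ∧ t₃ = 0))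
    (h : (N₀ : Polynomial ℤ)
        - ((s₁ : Polynomial ℤ) * X ^ k₁ + (s₂ : Polynomial ℤ) * X ^ k₂ + (s₃ : Polynomial ℤ) * X ^ k₃)
        + ((t₁ : Polynomial ℤ) * X ^ (k₂ + k₃) + (t₂ : Polynomial ℤ) * X ^ (k₁ + k₃) + (t₃ : Polynomial ℤ) * X ^ (k₁ + k₂))
        - (N₃ : Polynomial ℤ) * X ^ (k₁ + k₂ + k₃) = 0) :
    N₀ = 0 ∧ N₃ = 0 ∧ s₂ = 0 ∧ s₃ = 0 ∧ t₂ = 0 ∧ t₃ = 0 ∧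
      s₁ = t₁ ∧ 1 ≤ s₁ ∧ k₁ = k₂ + k₃ := by
  have hsum : ∑ i, monomial (plusDegrees k₁ k₂ k₃ i) ((![N₀, t₁, t₂, t₃] i : ℕ) : ℤ)
      = ∑ j, monomial (minusDegrees k₁ k₂ k₃ j) ((![s₁, s₂, s₃, N₃] j : ℕ) : ℤ) := by
    simp only [Fin.sum_univ_four, plusDegrees, minusDegrees, ← C_mul_X_pow_eq_monomial]
    simp only [Fin.isValue, Matrix.cons_val, pow_zero, mul_one, map_natCast]
    linear_combination h
  have plus_eq_zero (i : Fin 4) (hi : i = 1 → k₁ ≠ k₂ + k₃) : ![N₀, t₁, t₂, t₃] i = 0 :=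
    Nat.cast_eq_zero.mp <| eq_zero_of_sum_monomial_eq_of_forall_ne hsum (fun _ => by positivity)
      fun _ hj => let ⟨hi1, _, hk⟩ := minusDegrees_eq_plusDegrees h12 h23 h3 hj; hi hi1 hk
  have minus_eq_zero (j : Fin 4) (hj : j = 0 → k₁ ≠ k₂ + k₃) : ![s₁, s₂, s₃, N₃] j = 0 :=
    Nat.cast_eq_zero.mp <| eq_zero_of_sum_monomial_eq_of_forall_ne hsum.symm
      (fun _ => by positivity)
      fun _ hi => let ⟨_, hj0, hk⟩ := minusDegrees_eq_plusDegrees h12 h23 h3 hi.symm; hj hj0 hk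
  obtain ⟨hN₀, ht₂, ht₃, hs₂, hs₃, hN₃⟩ : N₀ = 0 ∧ t₂ = 0 ∧ t₃ = 0 ∧ s₂ = 0 ∧ s₃ = 0 ∧ N₃ = 0 :=
    ⟨plus_eq_zero 0 nofun, plus_eq_zero 2 nofun, plus_eq_zero 3 nofun,
      minus_eq_zero 1 nofun, minus_eq_zero 2 nofun, minus_eq_zero 3 nofun⟩
  by_cases hk : k₁ = k₂ + k₃
  · have hst : s₁ = t₁ := by
      have := congrArg (coeff · k₁) hsum
      simp only [Fin.sum_univ_four, plusDegrees, minusDegrees, hk, hN₀, ht₂, ht₃, hs₂, hs₃, hN₃,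
        Fin.isValue, Matrix.cons_val, Matrix.cons_val_zero, Matrix.cons_val_one, CharP.cast_eq_zero,
        monomial_zero_right, zero_add, add_zero, coeff_monomial_same, Nat.cast_inj] at this
      exact this.symm
    exact ⟨hN₀, hN₃, hs₂, hs₃, ht₂, ht₃, hst, by omega, hk⟩
  · exact absurd ⟨hN₀, hN₃, minus_eq_zero 0 fun _ => hk, hs₂, hs₃, plus_eq_zero 1 fun _ => hk,
      ht₂, ht₃⟩ hne
end
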